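/- Let p ≥ 1 be an integer, r ∈ (0,1), and let (α_n) be complex numbers with |α_n| ≤ r for all n and Σ_{n=0}^∞ |α_{n+p} − α_n| < ∞. Let ζ lie on the unit circle and define the p-step blocks B_k(ζ) = A(α_{(k+1)p−1}, ζ)·A(α_{(k+1)p−2}, ζ)···A(α_{kp}, ζ). Then Σ_{k=0}^∞ ‖B_{k+1}(ζ) − B_k(ζ)‖ < ∞; indeed there is a constant C (depending only on p, r) with ‖B_{k+1}(ζ) − B_k(ζ)‖ ≤ C·Σ_{j=0}^{p−1} |α_{(k+1)p+j} − α_{kp+j}|. -/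

import Mathlib

/-!
Each transfer matrix factors as `A(α,z) = (1-|α|²)^{-1/2} (1 - J(α)) diag(z,1)` with
`J(α) = [[0, conj α], [α, 0]]`, and `J(α)ᴴ J(α) = |α|² I` gives `‖J(α)‖ = |α|` by the
C*-identity. So on `|α| ≤ r`, `|z| ≤ 1` the transfer matrices are bounded by
`K = (1+r)/√(1-r²)` and, the scalar factor being `C¹` on the compact disc `|α| ≤ r`, Lipschitz
in `α` uniformly in `z`. Telescoping the difference of two `p`-fold products bounds
`‖B_{k+1} - B_k‖` by `L K^p Σ_j |α_{(k+1)p+j} - α_{kp+j}|`, and these block sums are summable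
because they regroup the series `Σ |α_{n+p} - α_n|`.
-/

open Filter Finset
open scoped Matrix.Norms.L2Operator

/-- The Szegő transfer matrix `A(α,z) = (1-|α|²)^{-1/2} [[z, -conj α], [-zα, 1]]`. -/
noncomputable def szegoA (a z : ℂ) : Matrix (Fin 2) (Fin 2) ℂ :=
  (((Real.sqrt (1 - ‖a‖ ^ 2) : ℝ) : ℂ))⁻¹ •
    !![z, -(starRingEnd ℂ) a; -(z * a), 1]

/-- The ordered product `A(α_{start+m-1},ζ) ⋯ A(α_{start},ζ)`. -/
noncomputable def szegoProdFrom (α : ℕ → ℂ) (ζ : ℂ) (start : ℕ) :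
    ℕ → Matrix (Fin 2) (Fin 2) ℂ
  | 0 => 1
  | m + 1 => szegoA (α (start + m)) ζ * szegoProdFrom α ζ start m

/-- The `p`-step block `B_k(ζ) = A(α_{(k+1)p-1},ζ) ⋯ A(α_{kp},ζ)`. -/
noncomputable def szegoBlock (α : ℕ → ℂ) (ζ : ℂ) (p k : ℕ) : Matrix (Fin 2) (Fin 2) ℂ :=
  szegoProdFrom α ζ (k * p) p

open Matrix

variable {E : Type*} [NormedAddCommGroup E] [InnerProductSpace ℝ E] [ProperSpace E] in
theorem exists_lipschitzOnWith_inv_sqrt_one_sub_norm_sq {r : ℝ} (hr : r < 1) :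
    ∃ K, LipschitzOnWith K (fun a : E => (√(1 - ‖a‖ ^ 2))⁻¹) (Metric.closedBall 0 r) := by
  have hpos : ∀ a ∈ Metric.closedBall (0 : E) r, 0 < 1 - ‖a‖ ^ 2 := fun a ha => by
    rw [mem_closedBall_zero_iff] at ha
    nlinarith [norm_nonneg a]
  refine ContDiffOn.exists_lipschitzOnWith (n := 1) ?_ one_ne_zero (convex_closedBall 0 r)
    (isCompact_closedBall 0 r)
  exact ((contDiff_const.sub (contDiff_norm_sq ℝ)).contDiffOn.sqrt fun a ha => (hpos a ha).ne').inv
    fun a ha => (Real.sqrt_pos.2 (hpos a ha)).ne'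

theorem inv_sqrt_one_sub_sq_le {x r : ℝ} (hx : 0 ≤ x) (hxr : x ≤ r) (hr : r < 1) :
    (√(1 - x ^ 2))⁻¹ ≤ (√(1 - r ^ 2))⁻¹ :=
  inv_anti₀ (Real.sqrt_pos.2 (by nlinarith)) (Real.sqrt_le_sqrt (by nlinarith))

def szegoCross (a : ℂ) : Matrix (Fin 2) (Fin 2) ℂ := !![0, starRingEnd ℂ a; a, 0]

theorem szegoCross_sub (a b : ℂ) : szegoCross a - szegoCross b = szegoCross (a - b) := by
  ext i j; fin_cases i <;> fin_cases j <;> simp [szegoCross]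

theorem norm_szegoCross (a : ℂ) : ‖szegoCross a‖ = ‖a‖ := by
  have h : (szegoCross a)ᴴ * szegoCross a = ((‖a‖ ^ 2 : ℝ) : ℂ) • 1 := by
    ext i j; fin_cases i <;> fin_cases j <;> simp [szegoCross, mul_apply, Complex.conj_mul']
  have := l2_opNorm_conjTranspose_mul_self (szegoCross a)
  rw [h, norm_smul, norm_one, mul_one, Complex.norm_real,
    Real.norm_of_nonneg (by positivity)] at this
  nlinarith [norm_nonneg (szegoCross a), norm_nonneg a]

def szegoNumerator (a z : ℂ) : Matrix (Fin 2) (Fin 2) ℂ := !![z, -(starRingEnd ℂ) a; -(z * a), 1]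

theorem szegoA_eq_smul (a z : ℂ) :
    szegoA a z = (((√(1 - ‖a‖ ^ 2))⁻¹ : ℝ) : ℂ) • szegoNumerator a z := by
  rw [szegoA, szegoNumerator, Complex.ofReal_inv]

theorem szegoNumerator_eq_mul (a z : ℂ) :
    szegoNumerator a z = (1 - szegoCross a) * diagonal ![z, 1] := by
  ext i j; fin_cases i <;> fin_cases j <;> simp [szegoNumerator, szegoCross, mul_comm]

theorem norm_diagonal_le_one {z : ℂ} (hz : ‖z‖ ≤ 1) : ‖diagonal ![z, 1]‖ ≤ 1 := by
  rw [l2_opNorm_diagonal]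
  exact pi_norm_le_iff_of_nonneg zero_le_one |>.2 fun i => by fin_cases i <;> simp [hz]

theorem norm_szegoNumerator_le (a : ℂ) {z : ℂ} (hz : ‖z‖ ≤ 1) : ‖szegoNumerator a z‖ ≤ 1 + ‖a‖ :=
  calc ‖szegoNumerator a z‖ ≤ ‖1 - szegoCross a‖ * ‖diagonal ![z, 1]‖ := by
        rw [szegoNumerator_eq_mul]; exact norm_mul_le _ _
    _ ≤ (1 + ‖a‖) * 1 := by
        gcongr
        · simpa [norm_szegoCross] using norm_sub_le (1 : Matrix (Fin 2) (Fin 2) ℂ) (szegoCross a)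
        · exact norm_diagonal_le_one hz
    _ = 1 + ‖a‖ := mul_one _

theorem norm_szegoNumerator_sub_le (a b : ℂ) {z : ℂ} (hz : ‖z‖ ≤ 1) :
    ‖szegoNumerator a z - szegoNumerator b z‖ ≤ ‖a - b‖ := by
  have h : szegoNumerator a z - szegoNumerator b z = -(szegoCross (a - b) * diagonal ![z, 1]) := by
    rw [szegoNumerator_eq_mul, szegoNumerator_eq_mul, ← szegoCross_sub]; noncomm_ring
  calc ‖szegoNumerator a z - szegoNumerator b z‖ ≤ ‖szegoCross (a - b)‖ * ‖diagonal ![z, 1]‖ := by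
        rw [h, norm_neg]; exact norm_mul_le _ _
    _ ≤ ‖a - b‖ * 1 := by
        rw [norm_szegoCross]; gcongr; exact norm_diagonal_le_one hz
    _ = ‖a - b‖ := mul_one _

theorem norm_szegoA_le {r : ℝ} (hr : r < 1) {a z : ℂ} (ha : ‖a‖ ≤ r) (hz : ‖z‖ ≤ 1) :
    ‖szegoA a z‖ ≤ (√(1 - r ^ 2))⁻¹ * (1 + r) := by
  rw [szegoA_eq_smul, norm_smul, Complex.norm_real, Real.norm_of_nonneg (by positivity)]
  exact mul_le_mul (inv_sqrt_one_sub_sq_le (norm_nonneg a) ha hr)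
    ((norm_szegoNumerator_le a hz).trans (by linarith)) (norm_nonneg _) (by positivity)

theorem exists_lipschitz_szegoA {r : ℝ} (hr₀ : 0 ≤ r) (hr : r < 1) :
    ∃ L > 0, ∀ a b z : ℂ, ‖a‖ ≤ r → ‖b‖ ≤ r → ‖z‖ ≤ 1 →
      ‖szegoA a z - szegoA b z‖ ≤ L * ‖a - b‖ := by
  obtain ⟨K, hK⟩ := exists_lipschitzOnWith_inv_sqrt_one_sub_norm_sq (E := ℂ) hr
  have hr2 : 0 < 1 - r ^ 2 := by nlinarith
  refine ⟨K * (1 + r) + (√(1 - r ^ 2))⁻¹, by positivity, fun a b z ha hb hz => ?_⟩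
  set c : ℂ → ℝ := fun a => (√(1 - ‖a‖ ^ 2))⁻¹
  have hc : |c a - c b| ≤ K * ‖a - b‖ := by
    simpa [Real.dist_eq, dist_eq_norm] using
      hK.dist_le_mul a (mem_closedBall_zero_iff.2 ha) b (mem_closedBall_zero_iff.2 hb)
  have hsplit : szegoA a z - szegoA b z =
      ((c a - c b : ℝ) : ℂ) • szegoNumerator a z +
        ((c b : ℝ) : ℂ) • (szegoNumerator a z - szegoNumerator b z) := by
    rw [szegoA_eq_smul, szegoA_eq_smul, Complex.ofReal_sub]; simp only [c]; module
  rw [hsplit]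
  refine (norm_add_le _ _).trans ?_
  rw [norm_smul, norm_smul, Complex.norm_real, Complex.norm_real, Real.norm_eq_abs,
    Real.norm_of_nonneg (by positivity)]
  have := mul_le_mul hc ((norm_szegoNumerator_le a hz).trans (by linarith : 1 + ‖a‖ ≤ 1 + r))
    (norm_nonneg _) (by positivity)
  have := mul_le_mul (inv_sqrt_one_sub_sq_le (norm_nonneg b) hb hr)
    (norm_szegoNumerator_sub_le a b hz) (norm_nonneg _) (by positivity)
  nlinarith

section Products

variable {α : ℕ → ℂ} {ζ : ℂ} {K : ℝ}

theorem norm_szegoProdFrom_le (hK : ∀ n, ‖szegoA (α n) ζ‖ ≤ K) (start m : ℕ) :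
    ‖szegoProdFrom α ζ start m‖ ≤ K ^ m := by
  induction m with
  | zero => simp [szegoProdFrom]
  | succ m ih =>
    calc ‖szegoProdFrom α ζ start (m + 1)‖
        ≤ ‖szegoA (α (start + m)) ζ‖ * ‖szegoProdFrom α ζ start m‖ := norm_mul_le _ _
      _ ≤ K * K ^ m := mul_le_mul (hK _) ih (norm_nonneg _) ((norm_nonneg _).trans (hK 0))
      _ = K ^ (m + 1) := (pow_succ' K m).symm

theorem norm_szegoProdFrom_sub_le (hK : ∀ n, ‖szegoA (α n) ζ‖ ≤ K) (hK₁ : 1 ≤ K)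
    (s₁ s₂ m : ℕ) :
    ‖szegoProdFrom α ζ s₁ m - szegoProdFrom α ζ s₂ m‖ ≤
      K ^ m * ∑ j ∈ range m, ‖szegoA (α (s₁ + j)) ζ - szegoA (α (s₂ + j)) ζ‖ := by
  induction m with
  | zero => simp [szegoProdFrom]
  | succ m ih =>
    set A₁ := szegoA (α (s₁ + m)) ζ
    set A₂ := szegoA (α (s₂ + m)) ζ
    set P₁ := szegoProdFrom α ζ s₁ m
    set P₂ := szegoProdFrom α ζ s₂ m
    set S := ∑ j ∈ range m, ‖szegoA (α (s₁ + j)) ζ - szegoA (α (s₂ + j)) ζ‖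
    have hsplit : A₁ * P₁ - A₂ * P₂ = (A₁ - A₂) * P₁ + A₂ * (P₁ - P₂) := by noncomm_ring
    have hKm : K ^ m ≤ K ^ (m + 1) := pow_le_pow_right₀ hK₁ m.le_succ
    calc ‖szegoProdFrom α ζ s₁ (m + 1) - szegoProdFrom α ζ s₂ (m + 1)‖
        = ‖(A₁ - A₂) * P₁ + A₂ * (P₁ - P₂)‖ := congrArg norm hsplit
      _ ≤ ‖A₁ - A₂‖ * ‖P₁‖ + ‖A₂‖ * ‖P₁ - P₂‖ :=
        (norm_add_le _ _).trans (add_le_add (norm_mul_le _ _) (norm_mul_le _ _))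
      _ ≤ ‖A₁ - A₂‖ * K ^ (m + 1) + K * (K ^ m * S) := by
        gcongr
        · exact (norm_szegoProdFrom_le hK s₁ m).trans hKm
        · exact hK _
      _ = _ := by rw [sum_range_succ]; ring

end Products

theorem Summable.sum_range_mul_add {E : Type*} [NormedAddCommGroup E] [CompleteSpace E]
    {f : ℕ → E} (hf : Summable f) (p : ℕ) :
    Summable fun k => ∑ j ∈ range p, f (k * p + j) :=
  summable_sum fun j hj => hf.comp_injective fun k l h => by
    have : 0 < p := pos_of_ne_zero (by rintro rfl; simp at hj)
    simpa [this.ne'] using h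

theorem block_bounded_variation_general
    (p : ℕ) (r : ℝ) (hr : r ∈ Set.Ioo (0 : ℝ) 1)
    (α : ℕ → ℂ) (hα : ∀ n, ‖α n‖ ≤ r)
    (hbv : Summable (fun n => ‖α (n + p) - α n‖))
    (ζ : ℂ) (hζ : ‖ζ‖ = 1) :
    Summable (fun k => ‖szegoBlock α ζ p (k + 1) - szegoBlock α ζ p k‖) ∧
    ∃ C > (0 : ℝ), ∀ (α' : ℕ → ℂ) (ζ' : ℂ),
      (∀ n, ‖α' n‖ ≤ r) → ‖ζ'‖ = 1 →
      ∀ k, ‖szegoBlock α' ζ' p (k + 1) - szegoBlock α' ζ' p k‖ ≤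
        C * ∑ j ∈ Finset.range p, ‖α' ((k + 1) * p + j) - α' (k * p + j)‖ := by
  obtain ⟨hr₀, hr₁⟩ := hr
  set K := (√(1 - r ^ 2))⁻¹ * (1 + r)
  have hK₁ : 1 ≤ K := one_le_mul_of_one_le_of_one_le
    (by simpa using inv_sqrt_one_sub_sq_le le_rfl hr₀.le hr₁) (by linarith)
  obtain ⟨L, hL, hLip⟩ := exists_lipschitz_szegoA hr₀.le hr₁
  have hbound : ∀ (α' : ℕ → ℂ) (ζ' : ℂ), (∀ n, ‖α' n‖ ≤ r) → ‖ζ'‖ = 1 → ∀ k,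
      ‖szegoBlock α' ζ' p (k + 1) - szegoBlock α' ζ' p k‖ ≤
        L * K ^ p * ∑ j ∈ range p, ‖α' ((k + 1) * p + j) - α' (k * p + j)‖ := by
    intro α' ζ' hα' hζ' k
    calc _ ≤ K ^ p * ∑ j ∈ range p,
            ‖szegoA (α' ((k + 1) * p + j)) ζ' - szegoA (α' (k * p + j)) ζ'‖ :=
          norm_szegoProdFrom_sub_le (fun n => norm_szegoA_le hr₁ (hα' n) hζ'.le) hK₁ _ _ p
      _ ≤ K ^ p * ∑ j ∈ range p, L * ‖α' ((k + 1) * p + j) - α' (k * p + j)‖ := by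
          gcongr with j; exact hLip _ _ _ (hα' _) (hα' _) hζ'.le
      _ = _ := by rw [← mul_sum]; ring
  refine ⟨?_, L * K ^ p, by positivity, hbound⟩
  refine .of_nonneg_of_le (fun _ => norm_nonneg _) (hbound α ζ hα hζ) (.mul_left _ ?_)
  exact (hbv.sum_range_mul_add p).congr fun k => sum_congr rfl fun j _ => by
    rw [add_one_mul, add_right_comm]

/-- Block bounded-variation estimate: if `|αₙ| ≤ r < 1` and `Σ |α_{n+p} - αₙ| < ∞`, then the
blocks `B_k(ζ)` are of bounded variation, with a uniform estimate
`‖B_{k+1} - B_k‖ ≤ C Σ_{j<p} |α_{(k+1)p+j} - α_{kp+j}|` for a constant `C = C(p,r)`. -/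
theorem block_bounded_variation
    (p : ℕ) (hp : 1 ≤ p) (r : ℝ) (hr : r ∈ Set.Ioo (0 : ℝ) 1)
    (α : ℕ → ℂ) (hα : ∀ n, ‖α n‖ ≤ r)
    (hbv : Summable (fun n => ‖α (n + p) - α n‖))
    (ζ : ℂ) (hζ : ‖ζ‖ = 1) :
    Summable (fun k => ‖szegoBlock α ζ p (k + 1) - szegoBlock α ζ p k‖) ∧
    ∃ C > (0 : ℝ), ∀ (α' : ℕ → ℂ) (ζ' : ℂ),
      (∀ n, ‖α' n‖ ≤ r) → ‖ζ'‖ = 1 →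
      ∀ k, ‖szegoBlock α' ζ' p (k + 1) - szegoBlock α' ζ' p k‖ ≤
        C * ∑ j ∈ Finset.range p, ‖α' ((k + 1) * p + j) - α' (k * p + j)‖ :=
  block_bounded_variation_general p r hr α hα hbv ζ hζ
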